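/- Let M, R be real 3×3 matrices, x ∈ ℝ³, k ∈ ℝ, and let w ∈ ℝ³ be the unique vector with w^× = P_a(M R), where P_a(A) := (A − Aᵀ)/2. Then tr( −R (x^× − k · P_a(M R)) M ) − 2 xᵀ w = −k ‖P_a(M R)‖_F². (This is the algebraic identity showing that the Lyapunov function V_R = tr((I₃ − R̃)M) + (1/k_ω)‖b̃_ω‖² has derivative −k_R ‖P_a(M R̃)‖_F² along the bias-coupled attitude error dynamics.) -/

import Mathlib

/-!
Both terms of the trace are traces against skew-symmetric matrices, and pairing any matrix with a
skew-symmetric one only sees its anti-symmetric part. Cycling the trace, `R x^× M` contributes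
`tr(P_a(M R) x^×) = tr(w^× x^×) = -2 w ⬝ x`, which cancels `-2 xᵀ w`, and `k R P_a(M R) M`
contributes `k tr(P_a(M R)²) = -k ‖P_a(M R)‖_F²`.
-/

open Matrix

/-- The skew-symmetric matrix `x^×` with `x^× y = x × y`. -/
noncomputable def crossMat (x : Fin 3 → ℝ) : Matrix (Fin 3) (Fin 3) ℝ :=
  !![0, -x 2, x 1; x 2, 0, -x 0; -x 1, x 0, 0]

/-- The anti-symmetric projection `P_a(A) := (A − Aᵀ)/2`. -/
noncomputable def antiProj (A : Matrix (Fin 3) (Fin 3) ℝ) : Matrix (Fin 3) (Fin 3) ℝ :=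
  (1/2 : ℝ) • (A - Aᵀ)

theorem Matrix.trace_transpose_mul_of_transpose_eq_neg {n : Type*} [Fintype n] {R : Type*}
    [CommRing R] (A S : Matrix n n R) (hS : Sᵀ = -S) :
    (Aᵀ * S).trace = -(A * S).trace := by
  rw [← trace_transpose, transpose_mul, transpose_transpose, hS, Matrix.neg_mul, trace_neg,
    trace_mul_comm]

theorem crossMat_transpose (x : Fin 3 → ℝ) : (crossMat x)ᵀ = -crossMat x := by
  ext i j
  fin_cases i <;> fin_cases j <;> simp [crossMat]

theorem antiProj_transpose (A : Matrix (Fin 3) (Fin 3) ℝ) : (antiProj A)ᵀ = -antiProj A := by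
  simp only [antiProj, transpose_smul, transpose_sub, transpose_transpose, ← smul_neg, neg_sub]

theorem trace_mul_eq_trace_antiProj_mul (A S : Matrix (Fin 3) (Fin 3) ℝ) (hS : Sᵀ = -S) :
    (A * S).trace = (antiProj A * S).trace := by
  rw [antiProj, Matrix.smul_mul, trace_smul, Matrix.sub_mul, trace_sub,
    trace_transpose_mul_of_transpose_eq_neg A S hS]
  simp only [smul_eq_mul]
  ring

theorem trace_crossMat_mul_crossMat (w x : Fin 3 → ℝ) :
    (crossMat w * crossMat x).trace = -2 * (w ⬝ᵥ x) := by
  simp [crossMat, trace_fin_three, Fin.sum_univ_three, dotProduct]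
  ring

theorem lyapunov_derivative_identity
    (M R : Matrix (Fin 3) (Fin 3) ℝ) (x : Fin 3 → ℝ) (k : ℝ)
    (w : Fin 3 → ℝ) (hw : crossMat w = antiProj (M * R)) :
    ((-R) * (crossMat x - k • antiProj (M * R)) * M).trace - 2 * (x ⬝ᵥ w) =
      -k * ((antiProj (M * R))ᵀ * antiProj (M * R)).trace := by
  have h_cross : (R * crossMat x * M).trace = -2 * (x ⬝ᵥ w) := by
    rw [trace_mul_cycle, trace_mul_eq_trace_antiProj_mul _ _ (crossMat_transpose x), ← hw,
      trace_crossMat_mul_crossMat, dotProduct_comm]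
  have h_proj : (R * antiProj (M * R) * M).trace =
      -((antiProj (M * R))ᵀ * antiProj (M * R)).trace := by
    rw [trace_mul_cycle, trace_mul_eq_trace_antiProj_mul _ _ (antiProj_transpose _),
      antiProj_transpose, Matrix.neg_mul, trace_neg, neg_neg]
  simp only [Matrix.mul_sub, Matrix.sub_mul, Matrix.mul_smul, Matrix.smul_mul, Matrix.neg_mul,
    trace_sub, trace_neg, trace_smul, h_cross, h_proj, smul_eq_mul]
  ring
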